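/- arXiv:2301.12897 — 2 statements merged into one kernel-verified Lean document; each statement's English description precedes it below -/
import Mathlib

section
/- The polynomial h = X\u2078 + 2X\u2077 + 2X\u2076 \u2212 4X\u2074 + 8X\u00b2 + 16X + 16 with rational coefficients is irreducible in \u211a[X], and h has no real roots, i.e., for every real number x one has x\u2078 + 2x\u2077 + 2x\u2076 \u2212 4x\u2074 + 8x\u00b2 + 16x + 16 \u2260 0. -/
open Polynomial

private noncomputable def Hz : ℤ[X] :=
  X ^ 8 + 2 * X ^ 7 + 2 * X ^ 6 - 4 * X ^ 4 + 8 * X ^ 2 + 16 * X + 16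

private lemma Hz_monic : Hz.Monic := by unfold Hz; monicity!

private lemma Hz_natDegree : Hz.natDegree = 8 := by unfold Hz; compute_degree!

private lemma Hz_eval (t : ℤ) :
    Hz.eval t = t ^ 8 + 2 * t ^ 7 + 2 * t ^ 6 - 4 * t ^ 4 + 8 * t ^ 2 + 16 * t + 16 := by
  simp [Hz]

private lemma real_pos (x : ℝ) :
    0 < x ^ 8 + 2 * x ^ 7 + 2 * x ^ 6 - 4 * x ^ 4 + 8 * x ^ 2 + 16 * x + 16 := by
  rcases eq_or_ne x (-2) with rfl | h
  · norm_num
  · have hne : x + 2 ≠ 0 := fun hc => h (by linarith)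
    have h2 : 0 < (x + 2) ^ 2 := pow_two_pos_of_ne_zero hne
    nlinarith [sq_nonneg (x ^ 3 * (x + 1)), sq_nonneg (x * (x ^ 2 - 2))]

private noncomputable def HR : ℝ[X] := Hz.map (Int.castRingHom ℝ)

private lemma HR_eval (x : ℝ) :
    HR.eval x = x ^ 8 + 2 * x ^ 7 + 2 * x ^ 6 - 4 * x ^ 4 + 8 * x ^ 2 + 16 * x + 16 := by
  simp [HR, Hz]

private lemma factor_pos (f g : ℝ[X]) (hf : f.Monic) (heq : HR = f * g) (t : ℝ) :
    0 < f.eval t := by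
  have hnoroot : ∀ s : ℝ, f.eval s ≠ 0 := by
    intro s hs
    have h0 : HR.eval s = 0 := by rw [heq, eval_mul, hs, zero_mul]
    rw [HR_eval] at h0
    exact absurd h0 (ne_of_gt (real_pos s))
  rcases Nat.eq_zero_or_pos f.natDegree with h0 | hdeg
  · rw [hf.natDegree_eq_zero.mp h0]; simp
  · have hdeg' : 0 < f.degree := natDegree_pos_iff_degree_pos.mp hdeg
    have htend := f.tendsto_atTop_of_leadingCoeff_nonneg hdeg' (by rw [hf.leadingCoeff]; norm_num)
    obtain ⟨M, hM1, hM2⟩ := ((htend.eventually_ge_atTop 1).and (Filter.eventually_ge_atTop t)).exists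
    by_contra hle
    push_neg at hle
    have h00 : (0 : ℝ) ∈ Set.Icc (f.eval t) (f.eval M) := ⟨hle, by linarith⟩
    obtain ⟨s, _, hs⟩ := intermediate_value_Icc hM2 f.continuousOn h00
    exact hnoroot s hs

private lemma natAbs_mem {w : ℤ} {N : ℕ} (hN : N ≠ 0) (h : w ∣ (N : ℤ)) :
    w.natAbs ∈ N.divisors :=
  Nat.mem_divisors.mpr ⟨by simpa using Int.natAbs_dvd_natAbs.mpr h, hN⟩

private lemma mem5 {w : ℤ} (h1 : 0 < w) (h2 : w ∣ 5) : w ∈ ({1, 5} : Finset ℤ) := by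
  have h3 : w.natAbs ∈ Nat.divisors 5 := natAbs_mem (by norm_num) (by exact_mod_cast h2)
  rw [show Nat.divisors 5 = {1, 5} from by decide] at h3
  simp only [Finset.mem_insert, Finset.mem_singleton] at h3 ⊢
  omega

private lemma mem16 {w : ℤ} (h1 : 0 < w) (h2 : w ∣ 16) : w ∈ ({1, 2, 4, 8, 16} : Finset ℤ) := by
  have h3 : w.natAbs ∈ Nat.divisors 16 := natAbs_mem (by norm_num) (by exact_mod_cast h2)
  rw [show Nat.divisors 16 = {1, 2, 4, 8, 16} from by decide] at h3
  simp only [Finset.mem_insert, Finset.mem_singleton] at h3 ⊢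
  omega

private lemma mem41 {w : ℤ} (h1 : 0 < w) (h2 : w ∣ 41) : w ∈ ({1, 41} : Finset ℤ) := by
  have h3 : w.natAbs ∈ Nat.divisors 41 := natAbs_mem (by norm_num) (by exact_mod_cast h2)
  rw [show Nat.divisors 41 = {1, 41} from by decide] at h3
  simp only [Finset.mem_insert, Finset.mem_singleton] at h3 ⊢
  omega

private lemma mem80 {w : ℤ} (h1 : 0 < w) (h2 : w ∣ 80) :
    w ∈ ({1, 2, 4, 5, 8, 10, 16, 20, 40, 80} : Finset ℤ) := by
  have h3 : w.natAbs ∈ Nat.divisors 80 := natAbs_mem (by norm_num) (by exact_mod_cast h2)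
  rw [show Nat.divisors 80 = {1, 2, 4, 5, 8, 10, 16, 20, 40, 80} from by decide] at h3
  simp only [Finset.mem_insert, Finset.mem_singleton] at h3 ⊢
  omega

private lemma mem656 {w : ℤ} (h1 : 0 < w) (h2 : w ∣ 656) :
    w ∈ ({1, 2, 4, 8, 16, 41, 82, 164, 328, 656} : Finset ℤ) := by
  have h3 : w.natAbs ∈ Nat.divisors 656 := natAbs_mem (by norm_num) (by exact_mod_cast h2)
  rw [show Nat.divisors 656 = {1, 2, 4, 8, 16, 41, 82, 164, 328, 656} from by decide] at h3
  simp only [Finset.mem_insert, Finset.mem_singleton] at h3 ⊢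
  omega

private lemma final1 : ∀ c ∈ ({1, 2, 4, 8, 16} : Finset ℤ), ∀ d ∈ ({1, 41} : Finset ℤ),
    ∀ b ∈ ({1, 5} : Finset ℤ), d = c + 1 → b = c - 1 → False := by decide

private lemma final2 : ∀ b ∈ ({1, 5} : Finset ℤ), ∀ c ∈ ({1, 2, 4, 8, 16} : Finset ℤ),
    ∀ d ∈ ({1, 41} : Finset ℤ), d - 2 * c + b = 2 →
    (2 + 2 * d - c).natAbs ∣ 656 → (2 + 2 * b - c).natAbs ∣ 80 →
    (2 + 2 * (2 + 2 * d - c) - d).natAbs ∣ 12205 →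
    (2 + 2 * (2 + 2 * b - c) - b).natAbs ∣ 3361 → False := by decide

private lemma final3 : ∀ b ∈ ({1, 5} : Finset ℤ), ∀ c ∈ ({1, 2, 4, 8, 16} : Finset ℤ),
    ∀ d ∈ ({1, 41} : Finset ℤ),
    (d - 3 * c + 3 * b - 6).natAbs ∣ 80 → (6 + 3 * d - 3 * c + b).natAbs ∣ 656 →
    (6 + 3 * (6 + 3 * d - 3 * c + b) - 3 * d + c).natAbs ∣ 12205 →
    (c - 3 * b + 3 * (d - 3 * c + 3 * b - 6) - 6).natAbs ∣ 3361 → False := by decide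

private lemma final4 : ∀ a ∈ ({1, 2, 4, 5, 8, 10, 16, 20, 40, 80} : Finset ℤ),
    ∀ b ∈ ({1, 5} : Finset ℤ), ∀ c ∈ ({1, 2, 4, 8, 16} : Finset ℤ),
    ∀ d ∈ ({1, 41} : Finset ℤ), ∀ e ∈ ({1, 2, 4, 8, 16, 41, 82, 164, 328, 656} : Finset ℤ),
    e - 4 * d + 6 * c - 4 * b + a = 24 →
    (5 * e - 10 * d + 10 * c - 5 * b + a).natAbs ∣ 12205 → False := by decide

private lemma no_small_factor (f g : ℤ[X]) (hf : f.Monic) (heq : Hz = f * g)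
    (h1 : 1 ≤ f.natDegree) (h4 : f.natDegree ≤ 4) : False := by
  have hpos : ∀ t : ℤ, 0 < f.eval t := by
    intro t
    have hR := factor_pos (f.map (Int.castRingHom ℝ)) (g.map (Int.castRingHom ℝ)) (hf.map _)
      (by rw [HR, heq, Polynomial.map_mul]) (t : ℝ)
    rw [Polynomial.eval_intCast_map] at hR
    simp only [eq_intCast] at hR
    exact_mod_cast hR
  have hv : ∀ t : ℤ, f.eval t ∣ t ^ 8 + 2 * t ^ 7 + 2 * t ^ 6 - 4 * t ^ 4 + 8 * t ^ 2 + 16 * t + 16 := by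
    intro t
    rw [← Hz_eval, heq, eval_mul]
    exact dvd_mul_right _ _
  have hvd : ∀ (t : ℤ) (N : ℕ), (t ^ 8 + 2 * t ^ 7 + 2 * t ^ 6 - 4 * t ^ 4 + 8 * t ^ 2 + 16 * t + 16 = (N : ℤ)) →
      (f.eval t).natAbs ∣ N := by
    intro t N hN
    have := Int.natAbs_dvd_natAbs.mpr (hN ▸ hv t)
    simpa using this
  have hcoef := hf.coeff_natDegree
  have hexp : ∀ t : ℤ, f.eval t = ∑ i ∈ Finset.range (f.natDegree + 1), f.coeff i * t ^ i :=
    fun t => eval_eq_sum_range t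
  -- divisibility facts at base points
  have d0 : (f.eval 0).natAbs ∣ 16 := hvd 0 16 (by norm_num)
  have d1 : (f.eval 1).natAbs ∣ 41 := hvd 1 41 (by norm_num)
  have dm1 : (f.eval (-1)).natAbs ∣ 5 := hvd (-1) 5 (by norm_num)
  have d2 : (f.eval 2).natAbs ∣ 656 := hvd 2 656 (by norm_num)
  have dm2 : (f.eval (-2)).natAbs ∣ 80 := hvd (-2) 80 (by norm_num)
  have d3 : (f.eval 3).natAbs ∣ 12205 := hvd 3 12205 (by norm_num)
  have dm3 : (f.eval (-3)).natAbs ∣ 3361 := hvd (-3) 3361 (by norm_num)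
  have m0 : f.eval 0 ∈ ({1, 2, 4, 8, 16} : Finset ℤ) :=
    mem16 (hpos 0) (Int.natAbs_dvd_natAbs.mp (by simpa using d0))
  have m1 : f.eval 1 ∈ ({1, 41} : Finset ℤ) :=
    mem41 (hpos 1) (Int.natAbs_dvd_natAbs.mp (by simpa using d1))
  have mm1 : f.eval (-1) ∈ ({1, 5} : Finset ℤ) :=
    mem5 (hpos (-1)) (Int.natAbs_dvd_natAbs.mp (by simpa using dm1))
  have hd : f.natDegree = 1 ∨ f.natDegree = 2 ∨ f.natDegree = 3 ∨ f.natDegree = 4 := by omega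
  rcases hd with hd | hd | hd | hd <;> rw [hd] at hexp hcoef
  · -- degree 1
    have e0 := hexp 0; have e1 := hexp 1; have em1 := hexp (-1)
    norm_num [Finset.sum_range_succ, hcoef] at e0 e1 em1
    exact final1 _ m0 _ m1 _ mm1 (by omega) (by omega)
  · -- degree 2
    have e0 := hexp 0; have e1 := hexp 1; have em1 := hexp (-1)
    have e2 := hexp 2; have em2 := hexp (-2); have e3 := hexp 3; have em3 := hexp (-3)
    norm_num [Finset.sum_range_succ, hcoef] at e0 e1 em1 e2 em2 e3 em3
    refine final2 _ mm1 _ m0 _ m1 (by omega) ?_ ?_ ?_ ?_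
    · rw [show 2 + 2 * f.eval 1 - f.eval 0 = f.eval 2 by omega]; exact d2
    · rw [show 2 + 2 * f.eval (-1) - f.eval 0 = f.eval (-2) by omega]; exact dm2
    · rw [show 2 + 2 * (2 + 2 * f.eval 1 - f.eval 0) - f.eval 1 = f.eval 3 by omega]; exact d3
    · rw [show 2 + 2 * (2 + 2 * f.eval (-1) - f.eval 0) - f.eval (-1) = f.eval (-3) by omega]
      exact dm3
  · -- degree 3
    have e0 := hexp 0; have e1 := hexp 1; have em1 := hexp (-1)
    have e2 := hexp 2; have em2 := hexp (-2); have e3 := hexp 3; have em3 := hexp (-3)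
    norm_num [Finset.sum_range_succ, hcoef] at e0 e1 em1 e2 em2 e3 em3
    refine final3 _ mm1 _ m0 _ m1 ?_ ?_ ?_ ?_
    · rw [show f.eval 1 - 3 * f.eval 0 + 3 * f.eval (-1) - 6 = f.eval (-2) by omega]; exact dm2
    · rw [show 6 + 3 * f.eval 1 - 3 * f.eval 0 + f.eval (-1) = f.eval 2 by omega]; exact d2
    · rw [show 6 + 3 * (6 + 3 * f.eval 1 - 3 * f.eval 0 + f.eval (-1)) - 3 * f.eval 1 + f.eval 0
          = f.eval 3 by omega]; exact d3
    · rw [show f.eval 0 - 3 * f.eval (-1) + 3 * (f.eval 1 - 3 * f.eval 0 + 3 * f.eval (-1) - 6) - 6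
          = f.eval (-3) by omega]; exact dm3
  · -- degree 4
    have e0 := hexp 0; have e1 := hexp 1; have em1 := hexp (-1)
    have e2 := hexp 2; have em2 := hexp (-2); have e3 := hexp 3
    norm_num [Finset.sum_range_succ, hcoef] at e0 e1 em1 e2 em2 e3
    have m2 : f.eval 2 ∈ ({1, 2, 4, 8, 16, 41, 82, 164, 328, 656} : Finset ℤ) :=
      mem656 (hpos 2) (Int.natAbs_dvd_natAbs.mp (by simpa using d2))
    have mm2 : f.eval (-2) ∈ ({1, 2, 4, 5, 8, 10, 16, 20, 40, 80} : Finset ℤ) :=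
      mem80 (hpos (-2)) (Int.natAbs_dvd_natAbs.mp (by simpa using dm2))
    refine final4 _ mm2 _ mm1 _ m0 _ m1 _ m2 (by omega) ?_
    rw [show 5 * f.eval 2 - 10 * f.eval 1 + 10 * f.eval 0 - 5 * f.eval (-1) + f.eval (-2)
        = f.eval 3 by omega]
    exact d3

private lemma Hz_irred : Irreducible Hz := by
  constructor
  · intro hu
    have h := natDegree_eq_zero_of_isUnit hu
    rw [Hz_natDegree] at h
    exact absurd h (by norm_num)
  · rintro f g heq
    by_contra hcon
    push_neg at hcon
    obtain ⟨hfu, hgu⟩ := hcon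
    have hf0 : f ≠ 0 := by rintro rfl; exact Hz_monic.ne_zero (by rw [heq, zero_mul])
    have hg0 : g ≠ 0 := by rintro rfl; exact Hz_monic.ne_zero (by rw [heq, mul_zero])
    have hsum : f.natDegree + g.natDegree = 8 := by
      rw [← natDegree_mul hf0 hg0, ← heq, Hz_natDegree]
    have hlc : f.leadingCoeff * g.leadingCoeff = 1 := by
      rw [← leadingCoeff_mul, ← heq]; exact Hz_monic
    obtain ⟨f', g', hf', hg', heq', hdf, hdg, hfu', hgu'⟩ :
        ∃ f' g' : ℤ[X], f'.Monic ∧ g'.Monic ∧ Hz = f' * g' ∧ f'.natDegree = f.natDegree ∧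
          g'.natDegree = g.natDegree ∧ (IsUnit f' → IsUnit f) ∧ (IsUnit g' → IsUnit g) := by
      rcases Int.eq_one_or_neg_one_of_mul_eq_one' hlc with ⟨ha, hb⟩ | ⟨ha, hb⟩
      · exact ⟨f, g, ha, hb, heq, rfl, rfl, id, id⟩
      · refine ⟨-f, -g, ?_, ?_, by rw [neg_mul_neg]; exact heq,
          natDegree_neg f, natDegree_neg g, ?_, ?_⟩
        · show (-f).leadingCoeff = 1
          rw [leadingCoeff_neg, ha]; norm_num
        · show (-g).leadingCoeff = 1
          rw [leadingCoeff_neg, hb]; norm_num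
        · intro h; rwa [IsUnit.neg_iff] at h
        · intro h; rwa [IsUnit.neg_iff] at h
    have hf1 : 1 ≤ f'.natDegree := by
      rcases Nat.eq_zero_or_pos f'.natDegree with h0 | h
      · exact absurd (hfu' (hf'.natDegree_eq_zero.mp h0 ▸ isUnit_one)) hfu
      · exact h
    have hg1 : 1 ≤ g'.natDegree := by
      rcases Nat.eq_zero_or_pos g'.natDegree with h0 | h
      · exact absurd (hgu' (hg'.natDegree_eq_zero.mp h0 ▸ isUnit_one)) hgu
      · exact h
    have hdeg8 : f'.natDegree + g'.natDegree = 8 := by rw [hdf, hdg]; exact hsum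
    rcases le_total f'.natDegree g'.natDegree with hle | hle
    · exact no_small_factor f' g' hf' heq' hf1 (by omega)
    · exact no_small_factor g' f' hg' (by rw [heq', mul_comm]) hg1 (by omega)

theorem stmt3 :
    Irreducible (X ^ 8 + 2 * X ^ 7 + 2 * X ^ 6 - 4 * X ^ 4 + 8 * X ^ 2 + 16 * X + 16 :
      Polynomial ℚ) ∧
    ∀ x : ℝ, x ^ 8 + 2 * x ^ 7 + 2 * x ^ 6 - 4 * x ^ 4 + 8 * x ^ 2 + 16 * x + 16 ≠ 0 := by
  constructor
  · have hmap : (X ^ 8 + 2 * X ^ 7 + 2 * X ^ 6 - 4 * X ^ 4 + 8 * X ^ 2 + 16 * X + 16 : ℚ[X])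
        = Hz.map (algebraMap ℤ ℚ) := by
      simp [Hz]
    rw [hmap]
    exact (Hz_monic.irreducible_iff_irreducible_map_fraction_map).mp Hz_irred
  · intro x
    exact (real_pos x).ne'
end

section
/- Let k be an algebraically closed field of characteristic 2 and let q \u2208 k[X,Y,Z,T] be a cubic of form a) or of form b) with coefficients a_{ij} \u2208 k. Set a\u2080\u2080 = a\u2083\u2083 = 0, and set (a\u2083\u2080, a\u2080\u2083) = (1,1) if q is of form a) and (a\u2083\u2080, a\u2080\u2083) = (1,0) if q is of form b). Let H be the 4\u00d74 matrix over k with rows (a\u2081\u2081, a\u2083\u2081, a\u2081\u2083, a\u2083\u2083), (a\u2080\u2081, a\u2082\u2081, a\u2080\u2083, a\u2082\u2083), (a\u2081\u2080, a\u2083\u2080, a\u2081\u2082, a\u2083\u2082), (a\u2080\u2080, a\u2082\u2080, a\u2080\u2082, a\u2082\u2082) (the Hasse\u2013Witt matrix of the curve V(XY+ZT, q)). Suppose that H has rank 2 and that H \u00b7 H\u207d\u00b2\u207e = 0, where H\u207d\u00b2\u207e denotes the matrix obtained from H by squaring each entry (these two conditions express that the curve has Ekedahl\u2013Oort type [4,3]).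 Then V(XY+ZT, q) has a singular point: there exists a nonzero vector p \u2208 k\u2074 with (XY+ZT)(p) = q(p) = 0 at which the 2\u00d74 Jacobian matrix of (XY+ZT, q) has rank at most 1. In other words, no smooth curve of Ekedahl\u2013Oort type [4,3] lies on the non-singular quadric XY + ZT = 0. -/
open MvPolynomial

/-- Cubic of form a):
`X³ + Y³ + a₂₁X²Y + a₃₁X²Z + a₂₀X²T + a₁₂XY² + a₂₂XYZ + a₁₁XYT + a₃₂XZ² + a₁₀XT²
  + a₁₃Y²Z + a₀₂Y²T + a₂₃YZ² + a₀₁YT²`, with `X = X 0, Y = X 1, Z = X 2, T = X 3`. -/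
noncomputable def cubicA (k : Type*) [Field k]
    (a21 a31 a20 a12 a22 a11 a32 a10 a13 a02 a23 a01 : k) : MvPolynomial (Fin 4) k :=
  X 0 ^ 3 + X 1 ^ 3 + C a21 * (X 0 ^ 2 * X 1) + C a31 * (X 0 ^ 2 * X 2) +
    C a20 * (X 0 ^ 2 * X 3) + C a12 * (X 0 * X 1 ^ 2) + C a22 * (X 0 * X 1 * X 2) +
    C a11 * (X 0 * X 1 * X 3) + C a32 * (X 0 * X 2 ^ 2) + C a10 * (X 0 * X 3 ^ 2) +
    C a13 * (X 1 ^ 2 * X 2) + C a02 * (X 1 ^ 2 * X 3) + C a23 * (X 1 * X 2 ^ 2) +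
    C a01 * (X 1 * X 3 ^ 2)

/-- Cubic of form b): as form a) but without the `Y³` term. -/
noncomputable def cubicB (k : Type*) [Field k]
    (a21 a31 a20 a12 a22 a11 a32 a10 a13 a02 a23 a01 : k) : MvPolynomial (Fin 4) k :=
  X 0 ^ 3 + C a21 * (X 0 ^ 2 * X 1) + C a31 * (X 0 ^ 2 * X 2) +
    C a20 * (X 0 ^ 2 * X 3) + C a12 * (X 0 * X 1 ^ 2) + C a22 * (X 0 * X 1 * X 2) +
    C a11 * (X 0 * X 1 * X 3) + C a32 * (X 0 * X 2 ^ 2) + C a10 * (X 0 * X 3 ^ 2) +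
    C a13 * (X 1 ^ 2 * X 2) + C a02 * (X 1 ^ 2 * X 3) + C a23 * (X 1 * X 2 ^ 2) +
    C a01 * (X 1 * X 3 ^ 2)

/-- The 2×4 Jacobian matrix of the pair `(f, q)` evaluated at the point `p ∈ k⁴`. -/
noncomputable def jacMat (k : Type*) [Field k] (f q : MvPolynomial (Fin 4) k)
    (p : Fin 4 → k) : Matrix (Fin 2) (Fin 4) k :=
  Matrix.of ![fun j => MvPolynomial.eval p (MvPolynomial.pderiv j f),
              fun j => MvPolynomial.eval p (MvPolynomial.pderiv j q)]


lemma exists_isotropic_ker {k : Type*} [Field k] [IsAlgClosed k]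
    (H : Matrix (Fin 4) (Fin 4) k) (hrank : H.rank = 2) :
    ∃ u : Fin 4 → k, u ≠ 0 ∧ H.mulVec u = 0 ∧ u 0 * u 3 + u 1 * u 2 = 0 := by
  have hrn := LinearMap.finrank_range_add_finrank_ker H.mulVecLin
  rw [Module.finrank_fintype_fun_eq_card, Fintype.card_fin] at hrn
  have hker : Module.finrank k (LinearMap.ker H.mulVecLin) = 2 := by
    have h0 : H.rank = Module.finrank k (LinearMap.range H.mulVecLin) := rfl
    omega
  let b := Module.finBasisOfFinrankEq k (LinearMap.ker H.mulVecLin) hker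
  let v₁ : LinearMap.ker H.mulVecLin := b 0
  let v₂ : LinearMap.ker H.mulVecLin := b 1
  set u₁ : Fin 4 → k := (v₁ : Fin 4 → k) with hu₁
  set u₂ : Fin 4 → k := (v₂ : Fin 4 → k) with hu₂
  have hk1 : H.mulVec u₁ = 0 := by
    have := v₁.2
    rwa [LinearMap.mem_ker, Matrix.mulVecLin_apply] at this
  have hk2 : H.mulVec u₂ = 0 := by
    have := v₂.2
    rwa [LinearMap.mem_ker, Matrix.mulVecLin_apply] at this
  have hne1 : u₁ ≠ 0 := fun h => b.ne_zero 0 (Subtype.ext h)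
  by_cases hα : u₁ 0 * u₁ 3 + u₁ 1 * u₁ 2 = 0
  · exact ⟨u₁, hne1, hk1, hα⟩
  · set α := u₁ 0 * u₁ 3 + u₁ 1 * u₁ 2 with hadef
    set β := u₁ 0 * u₂ 3 + u₂ 0 * u₁ 3 + u₁ 1 * u₂ 2 + u₂ 1 * u₁ 2 with hβ
    set γ := u₂ 0 * u₂ 3 + u₂ 1 * u₂ 2 with hγ
    obtain ⟨s, hs⟩ := IsAlgClosed.exists_root
      (Polynomial.C α * Polynomial.X ^ 2 + Polynomial.C β * Polynomial.X + Polynomial.C γ)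
      (by rw [Polynomial.degree_quadratic hα]; decide)
    have hs' : α * s ^ 2 + β * s + γ = 0 := by
      simpa [Polynomial.IsRoot] using hs
    refine ⟨s • u₁ + u₂, ?_, ?_, ?_⟩
    · intro h
      have hli := Fintype.linearIndependent_iff.mp b.linearIndependent ![s, 1]
      have hsum : (∑ i : Fin 2, ![s, (1:k)] i • b i) = 0 := by
        rw [Fin.sum_univ_two]
        apply Subtype.ext
        simp only [Matrix.cons_val_zero, Matrix.cons_val_one, Matrix.head_cons,
          Submodule.coe_add, SetLike.val_smul, one_smul, ZeroMemClass.coe_zero]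
        exact h
      simpa using hli hsum 1
    · rw [Matrix.mulVec_add, Matrix.mulVec_smul, hk1, hk2, smul_zero, add_zero]
    · simp only [Pi.add_apply, Pi.smul_apply, smul_eq_mul]
      linear_combination hs'

set_option maxHeartbeats 2000000 in
lemma aux_sing {k : Type*} [Field k] [IsAlgClosed k] [CharP k 2]
    (a21 a31 a20 a12 a22 a11 a32 a10 a13 a02 a23 a01 a03 : k)
    (q f : MvPolynomial (Fin 4) k)
    (hq : q = X 0 ^ 3 + C a03 * X 1 ^ 3 + C a21 * (X 0 ^ 2 * X 1) + C a31 * (X 0 ^ 2 * X 2) +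
      C a20 * (X 0 ^ 2 * X 3) + C a12 * (X 0 * X 1 ^ 2) + C a22 * (X 0 * X 1 * X 2) +
      C a11 * (X 0 * X 1 * X 3) + C a32 * (X 0 * X 2 ^ 2) + C a10 * (X 0 * X 3 ^ 2) +
      C a13 * (X 1 ^ 2 * X 2) + C a02 * (X 1 ^ 2 * X 3) + C a23 * (X 1 * X 2 ^ 2) +
      C a01 * (X 1 * X 3 ^ 2))
    (hf : f = X 0 * X 1 + X 2 * X 3)
    (H : Matrix (Fin 4) (Fin 4) k)
    (hH : H = !![a11, a31, a13, 0; a01, a21, a03, a23; a10, 1, a12, a32; 0, a20, a02, a22])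
    (hrank : H.rank = 2) :
    ∃ p : Fin 4 → k, p ≠ 0 ∧
      MvPolynomial.eval p f = 0 ∧ MvPolynomial.eval p q = 0 ∧
      (jacMat k f q p).rank ≤ 1 := by
  obtain ⟨u, hu0, huk, huQ⟩ := exists_isotropic_ker H hrank
  have h2 : (2:k) = 0 := by have := CharP.cast_eq_zero k 2; exact_mod_cast this
  have hsq : ∀ i, ∃ c : k, c ^ 2 = u i := fun i =>
    IsAlgClosed.exists_pow_nat_eq (u i) (by norm_num)
  choose w hw using hsq
  have hr := fun i => congrFun huk i
  have S0 : a11 * w 0 ^ 2 + a31 * w 1 ^ 2 + a13 * w 2 ^ 2 = 0 := by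
    have := hr 0
    simp [hH, Matrix.mulVec, dotProduct, Fin.sum_univ_four] at this
    rw [hw 0, hw 1, hw 2]; linear_combination this
  have S1 : a01 * w 0 ^ 2 + a21 * w 1 ^ 2 + a03 * w 2 ^ 2 + a23 * w 3 ^ 2 = 0 := by
    have := hr 1
    simp [hH, Matrix.mulVec, dotProduct, Fin.sum_univ_four] at this
    rw [hw 0, hw 1, hw 2, hw 3]; linear_combination this
  have S2 : a10 * w 0 ^ 2 + w 1 ^ 2 + a12 * w 2 ^ 2 + a32 * w 3 ^ 2 = 0 := by
    have := hr 2
    simp [hH, Matrix.mulVec, dotProduct, Fin.sum_univ_four] at this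
    rw [hw 0, hw 1, hw 2, hw 3]; linear_combination this
  have S3 : a20 * w 1 ^ 2 + a02 * w 2 ^ 2 + a22 * w 3 ^ 2 = 0 := by
    have := hr 3
    simp [hH, Matrix.mulVec, dotProduct, Fin.sum_univ_four] at this
    rw [hw 1, hw 2, hw 3]; linear_combination this
  have SQ : w 0 ^ 2 * w 3 ^ 2 + w 1 ^ 2 * w 2 ^ 2 = 0 := by
    rw [hw 0, hw 1, hw 2, hw 3]; linear_combination huQ
  have hE : w 1 * w 2 + w 3 * w 0 = 0 := by
    have h5 : (w 1 * w 2 + w 3 * w 0) ^ 2 = 0 := by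
      linear_combination SQ + (w 0 * w 3 * w 1 * w 2) * h2
    exact pow_eq_zero_iff two_ne_zero |>.mp h5
  refine ⟨![w 1, w 2, w 3, w 0], ?_, ?_, ?_, ?_⟩
  · intro h
    apply hu0
    funext i
    have e0 := congrFun h 3
    have e1 := congrFun h 0
    have e2 := congrFun h 1
    have e3 := congrFun h 2
    simp at e0 e1 e2 e3
    fin_cases i <;> rw [← hw _] <;> simp_all
  · rw [hf]
    simp
    linear_combination hE
  · rw [hq]
    simp
    linear_combination w 1 * S2 + w 2 * S1 + w 3 * S0 + w 0 * S3 + (a22 * w 3 + a11 * w 0) * hE +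
      (- a11 * w 0 ^ 2 * w 3 - a22 * w 3 ^ 2 * w 0) * h2
  · have hDf : ∀ j : Fin 4, eval ![w 1, w 2, w 3, w 0] (pderiv j f) = ![w 2, w 1, w 0, w 3] j := by
      intro j
      rw [hf]
      fin_cases j <;> simp [pderiv_X, Pi.single_apply]
    have hDq : ∀ j : Fin 4, eval ![w 1, w 2, w 3, w 0] (pderiv j q) =
        (a22 * w 3 + a11 * w 0) * ![w 2, w 1, w 0, w 3] j := by
      intro j
      rw [hq]
      fin_cases j <;> simp [pderiv_mul, pderiv_pow, pderiv_X, Pi.single_apply]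
      · linear_combination S2 + (w 1 ^ 2 + a21 * w 1 * w 2 + a31 * w 1 * w 3 + a20 * w 1 * w 0) * h2
      · linear_combination S1 + (a03 * w 2 ^ 2 + a12 * w 1 * w 2 + a13 * w 2 * w 3 + a02 * w 2 * w 0) * h2
      · linear_combination S0 + a22 * hE + (a32 * w 1 * w 3 + a23 * w 2 * w 3 - a11 * w 0 ^ 2 - a22 * w 3 * w 0) * h2
      · linear_combination S3 + a11 * hE + (a10 * w 1 * w 0 + a01 * w 2 * w 0 - a11 * w 3 * w 0 - a22 * w 3 ^ 2) * h2
    rw [Matrix.rank_eq_finrank_span_row]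
    have hle : Submodule.span k (Set.range (jacMat k f q ![w 1, w 2, w 3, w 0])) ≤
        k ∙ (jacMat k f q ![w 1, w 2, w 3, w 0] 0) := by
      rw [Submodule.span_le]
      rintro _ ⟨i, rfl⟩
      fin_cases i
      · exact Submodule.mem_span_singleton_self _
      · refine Submodule.mem_span_singleton.mpr ⟨a22 * w 3 + a11 * w 0, ?_⟩
        funext j
        rw [Pi.smul_apply, smul_eq_mul]
        show (a22 * w 3 + a11 * w 0) * jacMat k f q ![w 1, w 2, w 3, w 0] 0 j
            = jacMat k f q ![w 1, w 2, w 3, w 0] 1 j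
        have h0 : jacMat k f q ![w 1, w 2, w 3, w 0] 0 j
            = eval ![w 1, w 2, w 3, w 0] (pderiv j f) := rfl
        have h1 : jacMat k f q ![w 1, w 2, w 3, w 0] 1 j
            = eval ![w 1, w 2, w 3, w 0] (pderiv j q) := rfl
        rw [h0, h1, hDq j, hDf j]
    refine le_trans (Submodule.finrank_mono hle) ?_
    rcases eq_or_ne (jacMat k f q ![w 1, w 2, w 3, w 0] 0) 0 with h | h
    · rw [h, Submodule.span_zero_singleton]
      simp
    · rw [finrank_span_singleton h]

theorem stmt7 (k : Type*) [Field k] [IsAlgClosed k] [CharP k 2]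
    (a21 a31 a20 a12 a22 a11 a32 a10 a13 a02 a23 a01 a30 a03 : k)
    (q : MvPolynomial (Fin 4) k)
    (hq : (q = cubicA k a21 a31 a20 a12 a22 a11 a32 a10 a13 a02 a23 a01 ∧
            a30 = 1 ∧ a03 = 1) ∨
          (q = cubicB k a21 a31 a20 a12 a22 a11 a32 a10 a13 a02 a23 a01 ∧
            a30 = 1 ∧ a03 = 0))
    (f : MvPolynomial (Fin 4) k) (hf : f = X 0 * X 1 + X 2 * X 3)
    (H : Matrix (Fin 4) (Fin 4) k)
    (hH : H = !![a11, a31, a13, 0;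
                 a01, a21, a03, a23;
                 a10, a30, a12, a32;
                 0,   a20, a02, a22])
    (hrank : H.rank = 2)
    (hsquare : H * H.map (fun x => x ^ 2) = 0) :
    ∃ p : Fin 4 → k, p ≠ 0 ∧
      MvPolynomial.eval p f = 0 ∧ MvPolynomial.eval p q = 0 ∧
      (jacMat k f q p).rank ≤ 1 := by
  rcases hq with ⟨hqa, h30, h03⟩ | ⟨hqb, h30, h03⟩
  · subst h30 h03
    refine aux_sing a21 a31 a20 a12 a22 a11 a32 a10 a13 a02 a23 a01 1 q f ?_ hf H hH hrank
    rw [hqa]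
    simp only [cubicA, map_one, one_mul]
  · subst h30 h03
    refine aux_sing a21 a31 a20 a12 a22 a11 a32 a10 a13 a02 a23 a01 0 q f ?_ hf H hH hrank
    rw [hqb]
    simp only [cubicB, map_zero, zero_mul, add_zero]
end
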